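/- Combining the multiplicative trace inequality with the gradient bound on the weight: for σ_z(x) = (|x−z|² + θ²)^(1/2) on an interval K = (a,b) ⊂ ℝ with z ∈ ℝ and any α ∈ ℝ, one has σ_z(a)^{2α} + σ_z(b)^{2α} ≤ (2/(b−a)) ∫_K σ_z^{2α} + 2|α| θ^{−1} ∫_K σ_z^{2α}. -/

import Mathlib

/-!
Along `[a, b]` each endpoint value of `f` differs from `f x` by at most `∫ |f'|`; averaging the
resulting bound `f a + f b ≤ 2 f x + ∫ |f'|` over `x ∈ [a, b]` gives the trace inequality
`f a + f b ≤ (2 / (b - a)) ∫ f + ∫ |f'|`. For `f = σ ^ (2α)` we have `|σ'| ≤ 1` and `σ ≥ θ`, so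
`|f'| = 2|α| σ ^ (2α - 1) |σ'| ≤ 2|α| θ⁻¹ f`.
-/

open intervalIntegral Set
open MeasureTheory (volume)

section Trace

variable {f f' : ℝ → ℝ} {a b : ℝ}

theorem add_le_two_mul_add_integral_abs_deriv {x : ℝ} (hx : x ∈ Icc a b)
    (hf : ∀ y ∈ uIcc a b, HasDerivAt f (f' y) y) (hf' : IntervalIntegrable f' volume a b) :
    f a + f b ≤ 2 * f x + ∫ y in a..b, |f' y| := by
  have hsub_left : uIcc a x ⊆ uIcc a b := uIcc_subset_uIcc_left (Icc_subset_uIcc hx)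
  have hsub_right : uIcc x b ⊆ uIcc a b := uIcc_subset_uIcc_right (Icc_subset_uIcc hx)
  have hint_left : IntervalIntegrable f' volume a x := hf'.mono_set hsub_left
  have hint_right : IntervalIntegrable f' volume x b := hf'.mono_set hsub_right
  have hftc_left : ∫ y in a..x, f' y = f x - f a :=
    integral_eq_sub_of_hasDerivAt (fun y hy => hf y (hsub_left hy)) hint_left
  have hftc_right : ∫ y in x..b, f' y = f b - f x :=
    integral_eq_sub_of_hasDerivAt (fun y hy => hf y (hsub_right hy)) hint_right
  have hsplit : (∫ y in a..x, |f' y|) + ∫ y in x..b, |f' y| = ∫ y in a..b, |f' y| :=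
    integral_add_adjacent_intervals hint_left.abs hint_right.abs
  have hle_left := (abs_le.mp (abs_integral_le_integral_abs (f := f') (μ := volume) hx.1)).1
  have hle_right := (abs_le.mp (abs_integral_le_integral_abs (f := f') (μ := volume) hx.2)).2
  linarith

theorem add_le_integral_add_integral_abs_deriv (hab : a < b)
    (hf : ∀ y ∈ uIcc a b, HasDerivAt f (f' y) y) (hf' : IntervalIntegrable f' volume a b) :
    f a + f b ≤ 2 / (b - a) * (∫ x in a..b, f x) + ∫ x in a..b, |f' x| := by
  have hcont : ContinuousOn f (uIcc a b) := fun y hy =>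
    (hf y hy).continuousAt.continuousWithinAt
  have hmean : (b - a) * (f a + f b) ≤ (b - a) * (2 / (b - a) * (∫ x in a..b, f x)
      + ∫ x in a..b, |f' x|) := by
    have hmono := integral_mono_on (μ := volume) hab.le intervalIntegrable_const
      ((hcont.intervalIntegrable.const_mul 2).add intervalIntegrable_const)
      (fun x hx => add_le_two_mul_add_integral_abs_deriv hx hf hf')
    rw [integral_const, integral_add (hcont.intervalIntegrable.const_mul 2) intervalIntegrable_const,
      integral_const_mul, integral_const, smul_eq_mul, smul_eq_mul] at hmono
    have hba : b - a ≠ 0 := (sub_pos.mpr hab).ne'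
    calc (b - a) * (f a + f b) ≤ _ := hmono
      _ = _ := by field_simp
  exact le_of_mul_le_mul_left hmean (sub_pos.mpr hab)

end Trace

theorem abs_mul_mul_rpow_sub_one_le {d p s θ : ℝ} (hθ : 0 < θ) (hs : θ ≤ s) (hd : |d| ≤ 1) :
    |d * p * s ^ (p - 1)| ≤ |p| * θ⁻¹ * s ^ p := by
  have hs_pos : 0 < s := hθ.trans_le hs
  have hsp : 0 < s ^ p := Real.rpow_pos_of_pos hs_pos p
  rw [abs_mul, abs_mul, Real.rpow_sub_one hs_pos.ne', abs_of_pos (div_pos hsp hs_pos)]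
  calc |d| * |p| * (s ^ p / s) ≤ 1 * |p| * (s ^ p / θ) := by gcongr
    _ = |p| * θ⁻¹ * s ^ p := by ring

section Weight

variable (z θ : ℝ)

theorem le_sqrt_sq_add_sq (x : ℝ) : θ ≤ √((x - z) ^ 2 + θ ^ 2) :=
  Real.le_sqrt_of_sq_le (by nlinarith [sq_nonneg (x - z)])

theorem hasDerivAt_sqrt_sq_add_sq (x : ℝ) (hθ : 0 < θ) :
    HasDerivAt (fun y => √((y - z) ^ 2 + θ ^ 2)) ((x - z) / √((x - z) ^ 2 + θ ^ 2)) x := by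
  have hinner : HasDerivAt (fun y => (y - z) ^ 2 + θ ^ 2) (2 * (x - z)) x := by
    simpa using (((hasDerivAt_id x).sub_const z).pow 2).add_const (θ ^ 2)
  convert hinner.sqrt (by positivity) using 1
  have : √((x - z) ^ 2 + θ ^ 2) ≠ 0 := by positivity
  field_simp

theorem abs_div_sqrt_sq_add_sq_le_one (x : ℝ) : |(x - z) / √((x - z) ^ 2 + θ ^ 2)| ≤ 1 := by
  rw [abs_div, abs_of_nonneg (Real.sqrt_nonneg _)]
  exact div_le_one_of_le₀ (Real.abs_le_sqrt (by nlinarith [sq_nonneg θ])) (Real.sqrt_nonneg _)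

end Weight

/-- Boundary bound for powers of the 1-D weight `σ_z(x) = ((x−z)² + θ²)^(1/2)`:
`σ_z(a)^{2α} + σ_z(b)^{2α} ≤ (2/(b−a)) ∫_K σ_z^{2α} + 2|α|θ⁻¹ ∫_K σ_z^{2α}`. -/
theorem stmt12 (z θ : ℝ) (hθ : 0 < θ) (α : ℝ) (a b : ℝ) (hab : a < b)
    (σ : ℝ → ℝ) (hσ : ∀ x, σ x = Real.sqrt ((x - z) ^ 2 + θ ^ 2)) :
    σ a ^ (2 * α) + σ b ^ (2 * α) ≤
      (2 / (b - a)) * (∫ x in a..b, σ x ^ (2 * α)) +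
        2 * |α| * θ⁻¹ * ∫ x in a..b, σ x ^ (2 * α) := by
  have hσ_ne : ∀ x, σ x ≠ 0 := fun x => by rw [hσ]; positivity
  have hσ_cont : Continuous σ := by rw [funext hσ]; fun_prop
  have hσ_deriv : ∀ x, HasDerivAt σ ((x - z) / σ x) x := fun x => by
    rw [funext hσ]; exact hasDerivAt_sqrt_sq_add_sq z θ x hθ
  have hpow_cont : Continuous fun x => σ x ^ (2 * α) :=
    hσ_cont.rpow_const fun x => Or.inl (hσ_ne x)
  set f' : ℝ → ℝ := fun x => (x - z) / σ x * (2 * α) * σ x ^ (2 * α - 1)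
  have hf'_cont : Continuous f' :=
    (((continuous_sub_right z).div hσ_cont hσ_ne).mul continuous_const).mul
      (hσ_cont.rpow_const fun x => Or.inl (hσ_ne x))
  have htrace := add_le_integral_add_integral_abs_deriv hab
    (fun x _ => (hσ_deriv x).rpow_const (p := 2 * α) (Or.inl (hσ_ne x)))
    (hf'_cont.intervalIntegrable a b)
  have hgrad : (∫ x in a..b, |f' x|) ≤ 2 * |α| * θ⁻¹ * ∫ x in a..b, σ x ^ (2 * α) := by
    rw [← integral_const_mul]
    refine integral_mono_on hab.le (hf'_cont.abs.intervalIntegrable a b)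
      ((hpow_cont.intervalIntegrable a b).const_mul _) fun x _ => ?_
    have := abs_mul_mul_rpow_sub_one_le (p := 2 * α) hθ (hσ x ▸ le_sqrt_sq_add_sq z θ x)
      (hσ x ▸ abs_div_sqrt_sq_add_sq_le_one z θ x)
    rwa [abs_mul 2 α, abs_two] at this
  linarith
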